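/- arXiv:1207.3518 — 3 statements merged into one kernel-verified Lean document; each statement's English description precedes it below -/
import Mathlib

section
/- There exists a connected, simple, locally finite graph G such that the adjacency operator A_G has deficiency indices η₊(A_G) = η₋(A_G) = 1. -/
noncomputable section

open scoped ComplexConjugate

namespace DefIdx

/-- The Hilbert space `ℓ²(V)` of square-summable complex functions on `V`. -/
abbrev L2 (V : Type*) := lp (fun _ : V => ℂ) 2

lemma memℓp_of_finite {V : Type*} {f : V → ℂ} (h : {x | f x ≠ 0}.Finite) :
    Memℓp f 2 :=
  (memℓp_zero h).of_exponent_ge zero_le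

/-- The subspace `C_c(V)` of finitely supported elements of `ℓ²(V)`. -/
def Cc (V : Type*) : Submodule ℂ (L2 V) where
  carrier := {f | {x | (f : ∀ _ : V, ℂ) x ≠ 0}.Finite}
  zero_mem' := by
    simp only [Set.mem_setOf_eq, lp.coeFn_zero, Pi.zero_apply, ne_eq, not_true_eq_false]
    simp
  add_mem' := by
    intro f g hf hg
    refine (hf.union hg).subset ?_
    intro x hx
    simp only [Set.mem_setOf_eq, lp.coeFn_add, Pi.add_apply] at hx ⊢
    by_contra hc
    try push_neg at hc
    simp only [Set.mem_union, Set.mem_setOf_eq, not_or, not_not] at hc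
    simp [hc.1, hc.2] at hx
  smul_mem' := by
    intro c f hf
    refine hf.subset ?_
    intro x hx
    simp only [Set.mem_setOf_eq, lp.coeFn_smul, Pi.smul_apply, smul_eq_mul] at hx ⊢
    intro h0
    simp [h0] at hx

section Adjacency

variable {V : Type*}

/-- The pointwise action of the adjacency matrix of a locally finite graph. -/
def adjA (G : SimpleGraph V) (hG : G.LocallyFinite) (f : V → ℂ) (x : V) : ℂ :=
  ∑ y ∈ @SimpleGraph.neighborFinset V G x (hG x), f y

lemma adjA_support (G : SimpleGraph V) (hG : G.LocallyFinite) {f : V → ℂ}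
    (hf : {x | f x ≠ 0}.Finite) : {x | adjA G hG f x ≠ 0}.Finite := by
  have hsub : {x | adjA G hG f x ≠ 0} ⊆ ⋃ y ∈ {x | f x ≠ 0}, (G.neighborSet y) := by
    intro x hx
    obtain ⟨y, hy, hfy⟩ := Finset.exists_ne_zero_of_sum_ne_zero hx
    have hadj : G.Adj x y := by
      have := @SimpleGraph.mem_neighborFinset V G x (hG x) y
      exact this.mp hy
    exact Set.mem_biUnion hfy (SimpleGraph.mem_neighborSet G y x |>.mpr hadj.symm)
  exact (hf.biUnion fun y _ => by haveI := hG y; exact (G.neighborSet y).toFinite).subset hsub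

/-- The adjacency operator of a locally finite graph, as a densely defined operator
on `ℓ²(V)` with domain the finitely supported functions. -/
def adjOp (G : SimpleGraph V) (hG : G.LocallyFinite) : L2 V →ₗ.[ℂ] L2 V where
  domain := Cc V
  toFun :=
    { toFun := fun f => ⟨adjA G hG f, memℓp_of_finite (adjA_support G hG f.2)⟩
      map_add' := by
        intro f g
        apply lp.ext
        funext x
        simp only [lp.coeFn_add, Pi.add_apply]
        show adjA G hG (((f : L2 V) + (g : L2 V) : L2 V)) x = _
        simp only [adjA, lp.coeFn_add, Pi.add_apply]
        exact Finset.sum_add_distrib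
      map_smul' := by
        intro c f
        apply lp.ext
        funext x
        simp only [RingHom.id_apply, lp.coeFn_smul, Pi.smul_apply, smul_eq_mul]
        show adjA G hG ((c • (f : L2 V) : L2 V)) x = _
        simp only [adjA, lp.coeFn_smul, Pi.smul_apply, smul_eq_mul]
        exact (Finset.mul_sum _ _ _).symm }

/-- The pointwise action of the combinatorial (physical) Laplacian. -/
def lapA (G : SimpleGraph V) (hG : G.LocallyFinite) (f : V → ℂ) (x : V) : ℂ :=
  ∑ y ∈ @SimpleGraph.neighborFinset V G x (hG x), (f x - f y)

lemma lapA_support (G : SimpleGraph V) (hG : G.LocallyFinite) {f : V → ℂ}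
    (hf : {x | f x ≠ 0}.Finite) : {x | lapA G hG f x ≠ 0}.Finite := by
  have hsub : {x | lapA G hG f x ≠ 0} ⊆
      {x | f x ≠ 0} ∪ ⋃ y ∈ {x | f x ≠ 0}, (G.neighborSet y) := by
    intro x hx
    by_contra hc
    simp only [Set.mem_union, Set.mem_setOf_eq, not_or, not_not] at hc
    obtain ⟨hfx, hmem⟩ := hc
    apply hx
    show lapA G hG f x = 0
    unfold lapA
    refine Finset.sum_eq_zero fun y hy => ?_
    have hadj : G.Adj x y := (@SimpleGraph.mem_neighborFinset V G x (hG x) y).mp hy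
    have hfy : f y = 0 := by
      by_contra hfy
      exact hmem (Set.mem_biUnion hfy ((SimpleGraph.mem_neighborSet G y x).mpr hadj.symm))
    rw [hfx, hfy, sub_zero]
  refine Set.Finite.subset ?_ hsub
  exact hf.union (hf.biUnion fun y _ => by haveI := hG y; exact (G.neighborSet y).toFinite)

/-- The combinatorial (physical) Laplacian of a locally finite graph, as a densely
defined operator on `ℓ²(V)` with domain the finitely supported functions. -/
def lapOp (G : SimpleGraph V) (hG : G.LocallyFinite) : L2 V →ₗ.[ℂ] L2 V where
  domain := Cc V
  toFun :=
    { toFun := fun f => ⟨lapA G hG f, memℓp_of_finite (lapA_support G hG f.2)⟩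
      map_add' := by
        intro f g
        apply lp.ext
        funext x
        simp only [lp.coeFn_add, Pi.add_apply]
        show lapA G hG (((f : L2 V) + (g : L2 V) : L2 V)) x = _
        simp only [lapA, lp.coeFn_add, Pi.add_apply]
        rw [← Finset.sum_add_distrib]
        exact Finset.sum_congr rfl fun y _ => by ring
      map_smul' := by
        intro c f
        apply lp.ext
        funext x
        simp only [RingHom.id_apply, lp.coeFn_smul, Pi.smul_apply, smul_eq_mul]
        show lapA G hG ((c • (f : L2 V) : L2 V)) x = _
        simp only [lapA, lp.coeFn_smul, Pi.smul_apply, smul_eq_mul]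
        rw [Finset.mul_sum]
        exact Finset.sum_congr rfl fun y _ => by ring }

end Adjacency

section Jacobi

/-- The pointwise action of the Jacobi matrix with off-diagonal entries `a n` and
diagonal entries `b n` (with the convention `a (-1) = 0`). -/
def jacA (a b : ℕ → ℝ) (f : ℕ → ℂ) (n : ℕ) : ℂ :=
  (if n = 0 then 0 else (a (n - 1) : ℂ) * f (n - 1)) + (b n : ℂ) * f n + (a n : ℂ) * f (n + 1)

lemma jacA_support (a b : ℕ → ℝ) {f : ℕ → ℂ} (hf : {n | f n ≠ 0}.Finite) :
    {n | jacA a b f n ≠ 0}.Finite := by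
  have hsub : {n | jacA a b f n ≠ 0} ⊆
      (fun m => m + 1) '' {n | f n ≠ 0} ∪ {n | f n ≠ 0} ∪ (fun m => m - 1) '' {n | f n ≠ 0} := by
    intro n hn
    by_contra hc
    simp only [Set.mem_union, not_or] at hc
    apply hn
    show jacA a b f n = 0
    have h1 : f n = 0 := by
      by_contra h; exact hc.1.2 h
    have h3 : f (n + 1) = 0 := by
      by_contra h
      exact hc.2 ⟨n + 1, h, by show n + 1 - 1 = n; omega⟩
    rcases Nat.eq_zero_or_pos n with h0 | h0
    · subst h0; simp [jacA, h1, h3]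
    · have h2 : f (n - 1) = 0 := by
        by_contra h
        exact hc.1.1 ⟨n - 1, h, by show n - 1 + 1 = n; omega⟩
      simp [jacA, h1, h2, h3]
  refine Set.Finite.subset ?_ hsub
  exact ((hf.image _).union hf).union (hf.image _)

/-- The Jacobi matrix with off-diagonal entries `a n > 0` and diagonal entries `b n`,
as a densely defined operator on `ℓ²(ℕ)` with domain the finitely supported sequences. -/
def jacOp (a b : ℕ → ℝ) : L2 ℕ →ₗ.[ℂ] L2 ℕ where
  domain := Cc ℕ
  toFun :=
    { toFun := fun f => ⟨jacA a b f, memℓp_of_finite (jacA_support a b f.2)⟩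
      map_add' := by
        intro f g
        apply lp.ext
        funext n
        simp only [lp.coeFn_add, Pi.add_apply]
        show jacA a b (((f : L2 ℕ) + (g : L2 ℕ) : L2 ℕ)) n = _
        simp only [jacA, lp.coeFn_add, Pi.add_apply]
        split <;> ring
      map_smul' := by
        intro c f
        apply lp.ext
        funext n
        simp only [RingHom.id_apply, lp.coeFn_smul, Pi.smul_apply, smul_eq_mul]
        show jacA a b ((c • (f : L2 ℕ) : L2 ℕ)) n = _
        simp only [jacA, lp.coeFn_smul, Pi.smul_apply, smul_eq_mul]
        split <;> ring }

end Jacobi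

section Eta

variable {H : Type*} [NormedAddCommGroup H] [InnerProductSpace ℂ H] [CompleteSpace H]

/-- The deficiency subspace `ker (T* - z)` of a (partially defined) operator. -/
def defSubspace (T : H →ₗ.[ℂ] H) (z : ℂ) : Submodule ℂ T.adjoint.domain :=
  LinearMap.ker (T.adjoint.toFun - z • T.adjoint.domain.subtype)

/-- The deficiency index `η₊(T) = dim ker (T* - i)`. -/
def etaP (T : H →ₗ.[ℂ] H) : Cardinal := Module.rank ℂ (defSubspace T Complex.I)

/-- The deficiency index `η₋(T) = dim ker (T* + i)`. -/
def etaM (T : H →ₗ.[ℂ] H) : Cardinal := Module.rank ℂ (defSubspace T (-Complex.I))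

/-- A partially defined operator is symmetric if `⟪T f, g⟫ = ⟪f, T g⟫` on its domain. -/
def IsSymm (T : H →ₗ.[ℂ] H) : Prop :=
  ∀ f g : T.domain, (inner ℂ (T f) (g : H) : ℂ) = inner ℂ (f : H) (T g)

/-- A densely defined operator is essentially self-adjoint if its closure is self-adjoint. -/
def EssSelfAdj (T : H →ₗ.[ℂ] H) : Prop :=
  T.closure.adjoint = T.closure

/-- The restriction of the sum of two partially defined operators to the domain
of the first one, assuming domain inclusion. -/
def sumRestrict (S T : H →ₗ.[ℂ] H) (h : S.domain ≤ T.domain) : H →ₗ.[ℂ] H :=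
  ⟨S.domain, S.toFun + T.toFun.comp (Submodule.inclusion h)⟩

/-- The sum of a partially defined operator and a bounded operator, with the
domain of the former. -/
def addBdd (S : H →ₗ.[ℂ] H) (B : H →L[ℂ] H) : H →ₗ.[ℂ] H :=
  ⟨S.domain, S.toFun + (B : H →ₗ[ℂ] H).comp S.domain.subtype⟩

end Eta

section Graphs

variable {V : Type*}

/-- The sphere of radius `n` around the vertex `v` (w.r.t. the graph metric). -/
def sphere (G : SimpleGraph V) (v : V) (n : ℕ) : Set V := {w | G.dist v w = n}

/-- A connected graph is an antitree with root `v` if every vertex `w ≠ v` at distance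
`n ≥ 1` from `v` has exactly `S_{n-1}(v) ∪ S_{n+1}(v)` as its set of neighbours. -/
def IsAntitree (G : SimpleGraph V) (v : V) : Prop :=
  G.Connected ∧ ∀ w, w ≠ v →
    G.neighborSet w = sphere G v (G.dist v w - 1) ∪ sphere G v (G.dist v w + 1)

/-- A function is radially symmetric (w.r.t. the root `v`) if it is constant on
each sphere around `v`. -/
def RadSymm (G : SimpleGraph V) (v : V) (f : V → ℂ) : Prop :=
  ∀ x y, G.dist v x = G.dist v y → f x = f y

/-- The average of `f` over the sphere of radius `n` around `v`. -/
def sphAvg (G : SimpleGraph V) (v : V) (hfin : ∀ n, (sphere G v n).Finite)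
    (f : V → ℂ) (n : ℕ) : ℂ :=
  (1 / ((sphere G v n).ncard : ℂ)) * ∑ y ∈ (hfin n).toFinset, f y

/-- The sphere-averaging map `P`. -/
def sphP (G : SimpleGraph V) (v : V) (hfin : ∀ n, (sphere G v n).Finite)
    (f : V → ℂ) (x : V) : ℂ :=
  sphAvg G v hfin f (G.dist v x)

/-- The disjoint union of `n` copies of a graph. -/
def copies (G : SimpleGraph V) (n : ℕ) : SimpleGraph (Fin n × V) where
  Adj p q := p.1 = q.1 ∧ G.Adj p.2 q.2
  symm := ⟨fun p q h => ⟨h.1.symm, h.2.symm⟩⟩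
  loopless := ⟨fun q h => G.loopless.irrefl q.2 h.2⟩

/-- The disjoint union of copies of a locally finite graph is locally finite. -/
def copiesLF (G : SimpleGraph V) (hG : G.LocallyFinite) (n : ℕ) :
    (copies G n).LocallyFinite := fun p =>
  Set.Finite.fintype (by
    haveI := hG p.2
    have hsub : (copies G n).neighborSet p ⊆ (fun w => (p.1, w)) '' (G.neighborSet p.2) := by
      rintro ⟨i, w⟩ ⟨h1, h2⟩
      exact ⟨w, h2, by simp [h1]⟩
    exact ((G.neighborSet p.2).toFinite.image _).subset hsub)

end Graphs



/-!
The graph is the antitree whose `n`-th sphere has `8 ^ n` vertices, each vertex being joined to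
every vertex of the two neighbouring spheres. The adjoint of the adjacency operator on `C_c` acts
as the formal adjacency operator on its maximal domain, so `ker (A* - z)` consists of the
square-summable solutions of `A g = z g`. For `z ≠ 0` such a `g` is constant on spheres, because
`z g x` is a sum over whole neighbouring spheres, and its radial profile satisfies the three-term
recurrence `8 ^ (n - 1) u (n - 1) + 8 ^ (n + 1) u (n + 1) = z u n`; so it is a multiple of a single
explicit solution. For `‖z‖ ≤ 1` that solution is bounded by `4⁻ⁿ`, hence `∑ 8 ^ n ‖u n‖² < ∞` and
both deficiency spaces are one-dimensional.
-/

lemma dense_Cc (V : Type*) : Dense (Cc V : Set (L2 V)) := by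
  classical
  intro f
  refine mem_closure_of_tendsto (lp.hasSum_single ENNReal.ofNat_ne_top f)
    (Filter.Eventually.of_forall fun s => Submodule.sum_mem _ fun i _ => ?_)
  refine (Set.finite_singleton i).subset fun x hx => ?_
  by_contra hxi
  exact hx (lp.single_apply_ne 2 i _ hxi)

section AdjointOfAdjacency

variable {V : Type*} {G : SimpleGraph V} [hG : G.LocallyFinite]

lemma tsum_adjA_mul (u : V → ℂ) {f : V → ℂ} (hf : {x | f x ≠ 0}.Finite) :
    ∑' x, adjA G hG u x * f x = ∑' x, u x * adjA G hG f x := by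
  classical
  set S := hf.toFinset
  have hS : ∀ x ∉ S, f x = 0 := fun x hx => by simpa [S] using hx
  set T := S.biUnion fun x => G.neighborFinset x
  have hT : ∀ y ∉ T, adjA G hG f y = 0 := fun y hy =>
    Finset.sum_eq_zero fun x hx => hS x fun hxS =>
      hy (Finset.mem_biUnion.2 ⟨x, hxS, by simpa [SimpleGraph.adj_comm] using hx⟩)
  rw [tsum_eq_sum (s := S) fun x hx => by rw [hS x hx, mul_zero],
    tsum_eq_sum (s := T) fun y hy => by rw [hT y hy, mul_zero]]
  simp only [adjA, Finset.sum_mul, Finset.mul_sum]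
  rw [Finset.sum_comm' (t' := T) (s' := fun y => G.neighborFinset y ∩ S)]
  · refine Finset.sum_congr rfl fun y _ => Finset.sum_subset Finset.inter_subset_left ?_
    intro x hxy hx
    rw [hS x fun hxS => hx (Finset.mem_inter.2 ⟨hxy, hxS⟩), mul_zero]
  · intro x y
    simp only [Finset.mem_inter, SimpleGraph.mem_neighborFinset, Finset.mem_biUnion, T]
    exact ⟨fun ⟨hx, hxy⟩ => ⟨⟨hxy.symm, hx⟩, x, hx, hxy⟩,
      fun ⟨⟨hyx, hx⟩, _⟩ => ⟨hx, hyx.symm⟩⟩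

lemma conj_adjA (g : V → ℂ) (x : V) : conj (adjA G hG g x) = adjA G hG (conj g) x :=
  map_sum _ _ _

lemma inner_adjOp (g : L2 V) (f : (adjOp G hG).domain) :
    inner ℂ g (adjOp G hG f) = ∑' x, conj (adjA G hG g x) * (f : V → ℂ) x := by
  rw [lp.inner_eq_tsum]
  simp only [RCLike.inner_apply', conj_adjA]
  exact (tsum_adjA_mul _ f.2).symm

lemma mem_adjoint_adjOp_domain {g h : L2 V} (hgh : ∀ x, adjA G hG g x = h x) :
    g ∈ (adjOp G hG).adjoint.domain := by
  refine LinearPMap.mem_adjoint_domain_of_exists g ⟨h, fun f => ?_⟩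
  rw [inner_adjOp, lp.inner_eq_tsum]
  simp only [RCLike.inner_apply', hgh]

lemma adjoint_adjOp_apply (g : (adjOp G hG).adjoint.domain) (x : V) :
    ((adjOp G hG).adjoint g : V → ℂ) x = adjA G hG g x := by
  classical
  have hδ : lp.single 2 x (1 : ℂ) ∈ (adjOp G hG).domain :=
    (Set.finite_singleton x).subset fun w hw =>
      by_contra fun hwx => hw (lp.single_apply_ne 2 x 1 hwx)
  have h := LinearPMap.adjoint_isFormalAdjoint (dense_Cc V) g ⟨_, hδ⟩
  rw [inner_adjOp, lp.inner_single_right, tsum_eq_single x fun w hw => by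
    rw [lp.single_apply_ne 2 x 1 hw, mul_zero]] at h
  simp only [RCLike.inner_apply', mul_one, lp.single_apply_self] at h
  exact star_injective h

lemma mem_defSubspace_adjOp_iff (z : ℂ) (g : (adjOp G hG).adjoint.domain) :
    g ∈ defSubspace (adjOp G hG) z ↔ ∀ x, adjA G hG g x = z * (g : V → ℂ) x := by
  rw [defSubspace, LinearMap.mem_ker, LinearMap.sub_apply, LinearMap.smul_apply, sub_eq_zero]
  simp only [← adjoint_adjOp_apply]
  exact ⟨fun h x => by rw [LinearPMap.toFun_eq_coe] at h; simp [h],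
    fun h => lp.ext (funext fun x => by simpa using h x)⟩

end AdjointOfAdjacency

section Antitree

def antitree (s : ℕ → ℕ) : SimpleGraph (Σ n, Fin (s n)) where
  Adj p q := p.1 = q.1 + 1 ∨ q.1 = p.1 + 1
  symm := ⟨fun _ _ => Or.symm⟩
  loopless := ⟨fun _ h => by omega⟩

variable {s : ℕ → ℕ}

instance : (antitree s).LocallyFinite := fun p =>
  (((Finset.range (p.1 + 2)).sigma fun _ => Finset.univ).finite_toSet.subset fun q hq => by
    simp only [SimpleGraph.mem_neighborSet, antitree] at hq
    simp only [Finset.coe_sigma, Set.mem_sigma_iff, Finset.coe_range, Set.mem_Iio,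
      Finset.coe_univ, Set.mem_univ, and_true]
    omega).fintype

lemma antitree_connected (hs : ∀ n, 0 < s n) : (antitree s).Connected := by
  have hroot : ∀ p, (antitree s).Reachable p ⟨0, ⟨0, hs 0⟩⟩ := by
    rintro ⟨n, a⟩
    induction n with
    | zero =>
      have h₁ : ∀ b, (antitree s).Adj ⟨0, b⟩ ⟨1, ⟨0, hs 1⟩⟩ := fun _ => Or.inr rfl
      exact (h₁ a).reachable.trans (h₁ _).reachable.symm
    | succ n ih =>
      have h : (antitree s).Adj ⟨n + 1, a⟩ ⟨n, ⟨0, hs n⟩⟩ := Or.inl rfl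
      exact h.reachable.trans (ih _)
  exact (SimpleGraph.connected_iff_exists_forall_reachable _).2 ⟨_, fun p => (hroot p).symm⟩

lemma neighborFinset_antitree_zero (a : Fin (s 0)) :
    (antitree s).neighborFinset ⟨0, a⟩ = ({1} : Finset ℕ).sigma fun _ => Finset.univ := by
  ext ⟨m, b⟩
  rw [SimpleGraph.mem_neighborFinset]
  simp [antitree]

lemma neighborFinset_antitree_succ (n : ℕ) (a : Fin (s (n + 1))) :
    (antitree s).neighborFinset ⟨n + 1, a⟩ =
      ({n, n + 2} : Finset ℕ).sigma fun _ => Finset.univ := by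
  ext ⟨m, b⟩
  rw [SimpleGraph.mem_neighborFinset]
  simp [antitree]
  omega

lemma adjA_antitree_zero (g : (Σ n, Fin (s n)) → ℂ) (a : Fin (s 0)) :
    adjA (antitree s) inferInstance g ⟨0, a⟩ = ∑ b, g ⟨1, b⟩ := by
  rw [adjA, neighborFinset_antitree_zero, Finset.sum_sigma, Finset.sum_singleton]

lemma adjA_antitree_succ (g : (Σ n, Fin (s n)) → ℂ) (n : ℕ) (a : Fin (s (n + 1))) :
    adjA (antitree s) inferInstance g ⟨n + 1, a⟩ = ∑ b, g ⟨n, b⟩ + ∑ b, g ⟨n + 2, b⟩ := by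
  rw [adjA, neighborFinset_antitree_succ, Finset.sum_sigma, Finset.sum_pair (by omega)]

lemma apply_mk_eq_of_adjA_eq_mul {z : ℂ} (hz : z ≠ 0) {g : (Σ n, Fin (s n)) → ℂ}
    (hg : ∀ x, adjA (antitree s) inferInstance g x = z * g x) (n : ℕ) (a b : Fin (s n)) :
    g ⟨n, a⟩ = g ⟨n, b⟩ := by
  refine mul_left_cancel₀ hz ?_
  rw [← hg, ← hg]
  cases n <;> simp only [adjA_antitree_zero, adjA_antitree_succ]

variable (s) in
/-- The solution of `s (n - 1) * u (n - 1) + s (n + 1) * u (n + 1) = z * u n` with `u 0 = 1`,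
the radial form of the eigenvalue equation `A g = z g` on `antitree s`. -/
def radialSol (z : ℂ) : ℕ → ℂ
  | 0 => 1
  | 1 => z / s 1
  | n + 2 => (z * radialSol z (n + 1) - s n * radialSol z n) / s (n + 2)

lemma radialSol_one (hs : ∀ n, 0 < s n) (z : ℂ) :
    s 1 * radialSol s z 1 = z * radialSol s z 0 := by
  have := (hs 1).ne'
  simp only [radialSol]
  field_simp

lemma radialSol_add_two (hs : ∀ n, 0 < s n) (z : ℂ) (n : ℕ) :
    s n * radialSol s z n + s (n + 2) * radialSol s z (n + 2) = z * radialSol s z (n + 1) := by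
  have := (hs (n + 2)).ne'
  rw [radialSol]
  field_simp
  ring

lemma eq_mul_radialSol (hs : ∀ n, 0 < s n) {z : ℂ} {v : ℕ → ℂ}
    (h₁ : s 1 * v 1 = z * v 0)
    (h₂ : ∀ n, s n * v n + s (n + 2) * v (n + 2) = z * v (n + 1)) (n : ℕ) :
    v n = v 0 * radialSol s z n := by
  induction n using Nat.twoStepInduction with
  | zero => simp [radialSol]
  | one =>
    have := (hs 1).ne'
    rw [radialSol]
    field_simp
    linear_combination h₁
  | more n ihn ihn1 =>
    have := (hs (n + 2)).ne'
    rw [radialSol]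
    field_simp
    linear_combination h₂ n - (s n : ℂ) * ihn + z * ihn1

variable (s) in
def radialFun (z : ℂ) (p : Σ n, Fin (s n)) : ℂ := radialSol s z p.1

lemma adjA_radialFun (hs : ∀ n, 0 < s n) (z : ℂ) (x : Σ n, Fin (s n)) :
    adjA (antitree s) inferInstance (radialFun s z) x = z * radialFun s z x := by
  obtain ⟨_ | n, a⟩ := x <;>
    simp only [adjA_antitree_zero, adjA_antitree_succ, radialFun, Finset.sum_const,
      Finset.card_univ, Fintype.card_fin, nsmul_eq_mul]
  · exact radialSol_one hs z
  · exact radialSol_add_two hs z n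

lemma eq_smul_radialFun (hs : ∀ n, 0 < s n) {z : ℂ} (hz : z ≠ 0) {g : (Σ n, Fin (s n)) → ℂ}
    (hg : ∀ x, adjA (antitree s) inferInstance g x = z * g x) :
    g = g ⟨0, ⟨0, hs 0⟩⟩ • radialFun s z := by
  set v : ℕ → ℂ := fun n => g ⟨n, ⟨0, hs n⟩⟩
  have hv : ∀ n a, g ⟨n, a⟩ = v n := fun n a => apply_mk_eq_of_adjA_eq_mul hz hg n a _
  have hsum : ∀ n, ∑ b, g ⟨n, b⟩ = s n * v n := fun n => by
    simp only [hv, Finset.sum_const, Finset.card_univ, Fintype.card_fin, nsmul_eq_mul]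
  have h₁ : s 1 * v 1 = z * v 0 := by
    rw [← hsum, ← adjA_antitree_zero, hg]
  have h₂ : ∀ n, s n * v n + s (n + 2) * v (n + 2) = z * v (n + 1) := fun n => by
    rw [← hsum, ← hsum, ← adjA_antitree_succ, hg]
  funext ⟨n, a⟩
  rw [hv, eq_mul_radialSol hs h₁ h₂]
  rfl

lemma rank_defSubspace_antitree (hs : ∀ n, 0 < s n) {z : ℂ} (hz : z ≠ 0)
    (hmem : Memℓp (radialFun s z) 2) :
    Module.rank ℂ (defSubspace (adjOp (antitree s) inferInstance) z) = 1 := by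
  let x₀ : Σ n, Fin (s n) := ⟨0, ⟨0, hs 0⟩⟩
  let r : L2 (Σ n, Fin (s n)) := ⟨radialFun s z, hmem⟩
  have hr : r ∈ (adjOp (antitree s) inferInstance).adjoint.domain :=
    mem_adjoint_adjOp_domain (h := z • r) (adjA_radialFun hs z)
  have hdef : ⟨r, hr⟩ ∈ defSubspace (adjOp (antitree s) inferInstance) z :=
    (mem_defSubspace_adjOp_iff z _).2 (adjA_radialFun hs z)
  refine rank_eq_one_iff.2 ⟨⟨⟨r, hr⟩, hdef⟩, fun h => ?_, fun g => ⟨(g : L2 _) x₀, ?_⟩⟩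
  · have h₀ := congr_arg (fun g : defSubspace _ z => (g : L2 _) x₀) h
    simp [r, x₀, radialFun, radialSol] at h₀
  · have hg := eq_smul_radialFun hs hz ((mem_defSubspace_adjOp_iff z _).1 g.2)
    exact Subtype.ext (Subtype.ext (lp.ext hg.symm))

lemma memℓp_radialFun {z : ℂ} (h : Summable fun n => s n * ‖radialSol s z n‖ ^ 2) :
    Memℓp (radialFun s z) 2 := by
  refine memℓp_gen ?_
  simp only [ENNReal.toReal_ofNat, Real.rpow_two]
  refine (summable_sigma_of_nonneg fun _ => by positivity).2 ⟨fun _ => .of_finite, ?_⟩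
  simpa [radialFun] using h

end Antitree

lemma norm_radialSol_eight_pow_le {z : ℂ} (hz : ‖z‖ ≤ 1) (n : ℕ) :
    ‖radialSol (8 ^ ·) z n‖ ≤ (1 / 4) ^ n := by
  induction n using Nat.twoStepInduction with
  | zero => simp [radialSol]
  | one =>
    simp only [radialSol, norm_div]
    norm_num
    linarith
  | more n ihn ihn1 =>
    have h₂ : (8 : ℝ) ^ n * (1 / 4) ^ n = 2 ^ n := by rw [← mul_pow]; norm_num
    have h₂' : (1 / 4 : ℝ) ^ (n + 2) * 8 ^ (n + 2) = 2 ^ (n + 2) := by rw [← mul_pow]; norm_num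
    have h₄ : (1 / 4 : ℝ) ^ (n + 1) ≤ 1 := pow_le_one₀ (by norm_num) (by norm_num)
    have h₁ : (1 : ℝ) ≤ 2 ^ n := one_le_pow₀ (by norm_num)
    rw [radialSol, norm_div, div_le_iff₀ (by simp)]
    push_cast
    calc ‖z * radialSol (8 ^ ·) z (n + 1) - 8 ^ n * radialSol (8 ^ ·) z n‖
        ≤ ‖z‖ * ‖radialSol (8 ^ ·) z (n + 1)‖ + 8 ^ n * ‖radialSol (8 ^ ·) z n‖ := by
          refine (norm_sub_le _ _).trans_eq ?_
          simp
      _ ≤ 1 * (1 / 4) ^ (n + 1) + 8 ^ n * (1 / 4) ^ n := by gcongr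
      _ ≤ (1 / 4) ^ (n + 2) * ‖(8 : ℂ) ^ (n + 2)‖ := by
          rw [norm_pow, Complex.norm_ofNat, h₂', h₂, pow_add 2 n 2]
          linarith

lemma memℓp_radialFun_eight_pow {z : ℂ} (hz : ‖z‖ ≤ 1) :
    Memℓp (radialFun (8 ^ ·) z) 2 := by
  refine memℓp_radialFun (Summable.of_nonneg_of_le (fun _ => by positivity) (fun n => ?_)
    (summable_geometric_of_lt_one (r := 1 / 2) (by norm_num) (by norm_num)))
  calc ((8 ^ n : ℕ) : ℝ) * ‖radialSol (8 ^ ·) z n‖ ^ 2 ≤ 8 ^ n * ((1 / 4) ^ n) ^ 2 := by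
        push_cast
        gcongr
        exact norm_radialSol_eight_pow_le hz n
    _ = (1 / 2) ^ n := by rw [← pow_mul, mul_comm n, pow_mul, ← mul_pow]; norm_num

/-- There exists a connected, simple, locally finite graph `G` such that
the adjacency operator `A_G` has deficiency indices `η₊(A_G) = η₋(A_G) = 1`. -/
theorem exists_connected_graph_with_deficiency_one :
    ∃ (V : Type) (_ : Countable V) (G : SimpleGraph V) (hG : G.LocallyFinite),
      G.Connected ∧ etaP (adjOp G hG) = 1 ∧ etaM (adjOp G hG) = 1 := by
  have hs : ∀ n, 0 < 8 ^ n := fun n => by positivity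
  refine ⟨Σ n, Fin (8 ^ n), inferInstance, antitree (8 ^ ·), inferInstance,
    antitree_connected hs, ?_, ?_⟩
  · exact rank_defSubspace_antitree hs Complex.I_ne_zero (memℓp_radialFun_eight_pow (by simp))
  · exact rank_defSubspace_antitree hs (neg_ne_zero.2 Complex.I_ne_zero)
      (memℓp_radialFun_eight_pow (by simp))

end DefIdx
end
end

section
/- Let 0 < α ≤ 1 and let G be an antitree whose spheres around the root have sizes s₀ = 1 and s_n = ⌊n^α⌋ for n ≥ 1. Then the adjacency operator A_G is essentially self-adjoint on C_c(V); equivalently, η₊(A_G) = η₋(A_G) = 0. -/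
noncomputable section

open scoped ComplexConjugate

open scoped InnerProductSpace LinearPMap

namespace Submodule

variable {𝕜 E F : Type*} [RCLike 𝕜] [NormedAddCommGroup E] [InnerProductSpace 𝕜 E]
  [NormedAddCommGroup F] [InnerProductSpace 𝕜 F]

theorem adjoint_topologicalClosure (g : Submodule 𝕜 (E × F)) :
    g.topologicalClosure.adjoint = g.adjoint := by
  ext x
  simp only [mem_adjoint_iff]
  refine ⟨fun h a b hab => h a b (g.le_topologicalClosure hab), fun h a b hab => ?_⟩
  have hclosed : IsClosed {p : E × F | ⟪p.2, x.1⟫_𝕜 - ⟪p.1, x.2⟫_𝕜 = 0} :=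
    isClosed_eq (by fun_prop) continuous_const
  exact closure_minimal (fun p hp => h p.1 p.2 hp) hclosed hab

end Submodule

namespace LinearPMap

theorem eq_of_le_of_add_smul_surjective {R M : Type*} [Ring R] [AddCommGroup M] [Module R M]
    {S A : M →ₗ.[R] M} (c : R) (h : S ≤ A) (hS : ∀ w, ∃ x : S.domain, S x + c • (x : M) = w)
    (hA : ∀ y : A.domain, A y + c • (y : M) = 0 → (y : M) = 0) : S = A := by
  refine eq_of_le_of_domain_eq h (le_antisymm h.1 fun y hy => ?_)
  obtain ⟨x, hx⟩ := hS (A ⟨y, hy⟩ + c • y)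
  have hAx : A ⟨x, h.1 x.2⟩ = S x := (h.2 rfl).symm
  have hxy : ((⟨y, hy⟩ - ⟨x, h.1 x.2⟩ : A.domain) : M) = 0 := by
    refine hA _ ?_
    rw [map_sub, hAx, Submodule.coe_sub, smul_sub]
    change A ⟨y, hy⟩ - S x + (c • y - c • (x : M)) = 0
    have hx' : A ⟨y, hy⟩ + c • y - (S x + c • (x : M)) = 0 := by rw [hx, sub_self]
    rw [← hx']
    abel
  rw [Submodule.coe_sub, sub_eq_zero] at hxy
  rw [show y = x from hxy]
  exact x.2

variable {E : Type*} [NormedAddCommGroup E] [InnerProductSpace ℂ E]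

theorem IsClosed.closure_eq {f : E →ₗ.[ℂ] E} (hf : f.IsClosed) : f.closure = f :=
  eq_of_eq_graph (by rw [← hf.isClosable.graph_closure_eq_closure_graph,
    IsClosed.submodule_topologicalClosure_eq hf])

theorem norm_add_I_smul_sq {S : E →ₗ.[ℂ] E} (hS : S.IsFormalAdjoint S) (x : S.domain) :
    ‖S x + Complex.I • (x : E)‖ ^ 2 = ‖S x‖ ^ 2 + ‖(x : E)‖ ^ 2 := by
  have hreal : (⟪S x, (x : E)⟫_ℂ).im = 0 := by
    have h := congrArg Complex.im ((hS x x).trans (inner_conj_symm (x : E) (S x)).symm)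
    rw [Complex.conj_im] at h
    linarith
  rw [norm_add_sq (𝕜 := ℂ), inner_smul_right, norm_smul, Complex.norm_I, one_mul]
  simp [hreal]

variable [CompleteSpace E] {T : E →ₗ.[ℂ] E}

theorem isFormalAdjoint_self_of_le_adjoint (hT : Dense (T.domain : Set E)) (h : T ≤ T†) :
    T.IsFormalAdjoint T := fun x y => by
  have hy : T y = T† ⟨y, h.1 y.2⟩ := h.2 rfl
  rw [hy, ← inner_conj_symm (x : E), adjoint_isFormalAdjoint hT, inner_conj_symm]

theorem adjoint_closure (hT : Dense (T.domain : Set E)) (hcl : T.IsClosable) :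
    T.closure† = T† := by
  have hT' : Dense (T.closure.domain : Set E) := hT.mono T.le_closure.1
  refine eq_of_eq_graph ?_
  rw [adjoint_graph_eq_graph_adjoint hT', adjoint_graph_eq_graph_adjoint hT,
    ← hcl.graph_closure_eq_closure_graph, Submodule.adjoint_topologicalClosure]

theorem IsFormalAdjoint.isClosable (hT : Dense (T.domain : Set E)) (h : T.IsFormalAdjoint T) :
    T.IsClosable :=
  (adjoint_isClosed hT).isClosable.leIsClosable (h.le_adjoint hT)

theorem IsFormalAdjoint.closure_le_adjoint (hT : Dense (T.domain : Set E))
    (h : T.IsFormalAdjoint T) : T.closure ≤ T† := by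
  simpa only [(adjoint_isClosed hT).closure_eq] using
    (adjoint_isClosed hT).isClosable.closure_mono (h.le_adjoint hT)

/-- `(x, T x) ↦ T x + i x` is bounded below on the graph of `T`, which is complete. -/
theorem isClosed_range_add_I_smul (hTc : T.IsClosed) (hT : T.IsFormalAdjoint T) :
    _root_.IsClosed (Set.range fun x : T.domain => T x + Complex.I • (x : E)) := by
  have : CompleteSpace T.graph := IsClosed.completeSpace_coe (hs := hTc)
  let ψ : T.graph →L[ℂ] E :=
    (ContinuousLinearMap.snd ℂ E E + Complex.I • ContinuousLinearMap.fst ℂ E E).comp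
      T.graph.subtypeL
  have hψ : AntilipschitzWith 1 ψ := AddMonoidHomClass.antilipschitz_of_bound ψ <| by
    rintro ⟨p, hp⟩
    obtain ⟨x, rfl⟩ := (mem_graph_iff' T).1 hp
    have h := norm_add_I_smul_sq hT x
    change max ‖(x : E)‖ ‖T x‖ ≤ 1 * ‖T x + Complex.I • (x : E)‖
    rw [one_mul]
    exact max_le (by nlinarith [norm_nonneg (x : E), norm_nonneg (T x + Complex.I • (x : E))])
      (by nlinarith [norm_nonneg (T x), norm_nonneg (T x + Complex.I • (x : E))])
  have hrange : Set.range ψ = Set.range fun x : T.domain => T x + Complex.I • (x : E) := by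
    ext w
    constructor
    · rintro ⟨⟨p, hp⟩, rfl⟩
      obtain ⟨x, rfl⟩ := (mem_graph_iff' T).1 hp
      exact ⟨x, rfl⟩
    · rintro ⟨x, rfl⟩
      exact ⟨⟨_, T.mem_graph x⟩, rfl⟩
  exact hrange ▸ hψ.isClosed_range ψ.uniformContinuous

theorem dense_range_add_I_smul (hT : Dense (T.domain : Set E))
    (hker : ∀ y : T†.domain, T† y = Complex.I • (y : E) → (y : E) = 0) :
    Dense (Set.range fun x : T.domain => T x + Complex.I • (x : E)) := by
  let K := LinearMap.range (T.toFun + Complex.I • T.domain.subtype)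
  have hK : Kᗮ = ⊥ := by
    refine (Submodule.eq_bot_iff _).2 fun y hy => ?_
    have hadj : ∀ x : T.domain, ⟪Complex.I • y, (x : E)⟫_ℂ = ⟪y, T x⟫_ℂ := by
      intro x
      have h : ⟪T x + Complex.I • (x : E), y⟫_ℂ = 0 :=
        (Submodule.mem_orthogonal K y).1 hy _ ⟨x, rfl⟩
      rw [inner_add_left, inner_smul_left, Complex.conj_I] at h
      rw [inner_smul_left, Complex.conj_I, ← inner_conj_symm y (x : E),
        ← inner_conj_symm y (T x),
        show ⟪T x, y⟫_ℂ = Complex.I * ⟪(x : E), y⟫_ℂ by linear_combination h]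
      simp
    have hy' : y ∈ T†.domain := mem_adjoint_domain_of_exists y ⟨_, hadj⟩
    exact hker ⟨y, hy'⟩ (adjoint_apply_eq hT ⟨y, hy'⟩ hadj)
  have hclosure : K.topologicalClosure = ⊤ := by
    rw [← Submodule.orthogonal_orthogonal_eq_closure, hK, Submodule.bot_orthogonal_eq_top]
  exact Submodule.dense_iff_topologicalClosure_eq_top.2 hclosure

end LinearPMap

namespace DefIdx

section Deficiency

open LinearPMap

variable {H : Type*} [NormedAddCommGroup H] [InnerProductSpace ℂ H] [CompleteSpace H]

theorem defSubspace_eq_bot_iff (T : H →ₗ.[ℂ] H) (z : ℂ) :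
    defSubspace T z = ⊥ ↔ ∀ y : T†.domain, T† y = z • (y : H) → (y : H) = 0 := by
  simp only [defSubspace, Submodule.eq_bot_iff, LinearMap.mem_ker, LinearMap.sub_apply,
    LinearMap.smul_apply, Submodule.subtype_apply, sub_eq_zero]
  exact forall_congr' fun y => imp_congr_right fun _ =>
    ⟨fun h => by rw [h]; rfl, fun h => Subtype.ext h⟩

theorem essSelfAdj_of_defSubspace_eq_bot {T : H →ₗ.[ℂ] H} (hT : Dense (T.domain : Set H))
    (hsymm : T.IsFormalAdjoint T) (hp : defSubspace T Complex.I = ⊥)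
    (hm : defSubspace T (-Complex.I) = ⊥) : EssSelfAdj T := by
  rw [defSubspace_eq_bot_iff] at hp hm
  have hcl : T.IsClosable := hsymm.isClosable hT
  have hadj : T.closure† = T† := adjoint_closure hT hcl
  have hle : T.closure ≤ T† := hsymm.closure_le_adjoint hT
  have hsurj : ∀ w, ∃ x : T.closure.domain, T.closure x + Complex.I • (x : H) = w := by
    have hclosed := isClosed_range_add_I_smul hcl.closure_isClosed
      (isFormalAdjoint_self_of_le_adjoint (hT.mono T.le_closure.1) (hadj ▸ hle))
    have hdense :
        Dense (Set.range fun x : T.closure.domain => T.closure x + Complex.I • (x : H)) :=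
      (dense_range_add_I_smul hT hp).mono <| Set.range_subset_iff.2 fun x : T.domain =>
        ⟨⟨x, T.le_closure.1 x.2⟩,
          by rw [T.le_closure.2 (x := x) (y := ⟨x, T.le_closure.1 x.2⟩) rfl]⟩
    exact Set.eq_univ_iff_forall.1 (hclosed.closure_eq.symm.trans hdense.closure_eq)
  rw [EssSelfAdj, hadj]
  refine (eq_of_le_of_add_smul_surjective Complex.I hle hsurj fun y hy => hm y ?_).symm
  rw [neg_smul]
  exact eq_neg_of_add_eq_zero_left hy

end Deficiency

section L2

variable {V : Type*}

theorem single_mem_Cc [DecidableEq V] (x : V) (a : ℂ) : lp.single 2 x a ∈ Cc V :=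
  (Set.finite_singleton x).subset fun w hw => by
    by_contra hwx
    exact hw (lp.single_apply_ne (E := fun _ : V => ℂ) 2 x a hwx)

theorem Cc_dense : Dense (Cc V : Set (L2 V)) := by
  classical
  intro f
  refine mem_closure_of_tendsto (lp.hasSum_single ENNReal.ofNat_ne_top f)
    (Filter.Eventually.of_forall fun s => ?_)
  exact Submodule.sum_mem _ fun x _ => single_mem_Cc x (f x)

theorem inner_eq_sum_of_forall_notMem (f g : L2 V) (s : Finset V)
    (h : ∀ x ∉ s, f x = 0 ∨ g x = 0) : ⟪f, g⟫_ℂ = ∑ x ∈ s, conj (f x) * g x := by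
  rw [lp.inner_eq_tsum, tsum_eq_sum fun x hx => ?_]
  · exact Finset.sum_congr rfl fun x _ => by rw [RCLike.inner_apply, mul_comm]
  · rcases h x hx with h | h <;> simp [h]

variable (G : SimpleGraph V) (hG : G.LocallyFinite)

theorem adjOp_apply (f : (adjOp G hG).domain) (x : V) :
    (adjOp G hG f : L2 V) x = ∑ y ∈ @SimpleGraph.neighborFinset V G x (hG x), (f : L2 V) y :=
  rfl

theorem sum_neighborFinset_eq_sum_ite [DecidableRel G.Adj] {h : V → ℂ} {s : Finset V}
    (hs : ∀ y ∉ s, h y = 0) (x : V) :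
    ∑ y ∈ @SimpleGraph.neighborFinset V G x (hG x), h y =
      ∑ y ∈ s, if G.Adj x y then h y else 0 := by
  rw [← Finset.sum_filter]
  refine (Finset.sum_subset (fun y hy => ?_) fun y hy hys => ?_).symm
  · simpa using (Finset.mem_filter.1 hy).2
  · simp only [Finset.mem_filter, SimpleGraph.mem_neighborFinset] at hy hys
    exact hs y fun hy' => hys ⟨hy', hy⟩

theorem adjOp_isFormalAdjoint : (adjOp G hG).IsFormalAdjoint (adjOp G hG) := by
  classical
  intro f g
  obtain ⟨s, hs⟩ : ∃ s : Finset V, ∀ x ∉ s, (f : L2 V) x = 0 ∧ (g : L2 V) x = 0 :=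
    ⟨(Set.Finite.union f.2 g.2).toFinset, fun x hx => by simpa [not_or] using hx⟩
  calc ⟪(adjOp G hG f : L2 V), (g : L2 V)⟫_ℂ
      = ∑ x ∈ s, ∑ y ∈ s, if G.Adj x y then conj ((f : L2 V) y) * (g : L2 V) x else 0 := by
        rw [inner_eq_sum_of_forall_notMem _ _ s fun x hx => .inr (hs x hx).2]
        refine Finset.sum_congr rfl fun x _ => ?_
        rw [adjOp_apply, sum_neighborFinset_eq_sum_ite G hG (fun y hy => (hs y hy).1) x,
          map_sum, Finset.sum_mul]
        exact Finset.sum_congr rfl fun y _ => by split_ifs <;> simp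
    _ = ∑ x ∈ s, ∑ y ∈ s, if G.Adj x y then conj ((f : L2 V) x) * (g : L2 V) y else 0 := by
        rw [Finset.sum_comm]
        simp only [G.adj_comm]
    _ = ⟪(f : L2 V), (adjOp G hG g : L2 V)⟫_ℂ := by
        rw [inner_eq_sum_of_forall_notMem _ _ s fun x hx => .inl (hs x hx).1]
        refine Finset.sum_congr rfl fun x _ => ?_
        rw [adjOp_apply, sum_neighborFinset_eq_sum_ite G hG (fun y hy => (hs y hy).2) x,
          Finset.mul_sum]
        exact Finset.sum_congr rfl fun y _ => by split_ifs <;> simp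

theorem adjOp_adjoint_apply (y : (adjOp G hG).adjoint.domain) (x : V) :
    ((adjOp G hG).adjoint y : L2 V) x =
      ∑ w ∈ @SimpleGraph.neighborFinset V G x (hG x), (y : L2 V) w := by
  classical
  let δ : (adjOp G hG).domain := ⟨lp.single 2 x 1, single_mem_Cc x 1⟩
  have hAδ : ∀ w, (adjOp G hG δ : L2 V) w =
      if w ∈ @SimpleGraph.neighborFinset V G x (hG x) then 1 else 0 := by
    intro w
    simp [adjOp_apply, δ, lp.single_apply, Pi.single_apply, G.adj_comm]
  have h := LinearPMap.adjoint_isFormalAdjoint Cc_dense y δ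
  rw [lp.inner_single_right, inner_eq_sum_of_forall_notMem _ _
    (@SimpleGraph.neighborFinset V G x (hG x)) fun w hw => .inr (by rw [hAδ, if_neg hw]),
    Finset.sum_congr rfl fun w hw => by rw [hAδ, if_pos hw, mul_one]] at h
  simpa [RCLike.inner_apply] using congrArg conj h

end L2

section Recurrence

variable {s : ℕ → ℝ} {u : ℕ → ℂ} {z : ℂ}

theorem im_conj_mul_eq_sum (h1 : (s 1 : ℂ) * u 1 = z * u 0)
    (hrec : ∀ n, (s n : ℂ) * u n + s (n + 2) * u (n + 2) = z * u (n + 1)) (n : ℕ) :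
    (conj ((s n : ℂ) * u n) * (s (n + 1) * u (n + 1))).im =
      z.im * ∑ k ∈ Finset.range (n + 1), s k * Complex.normSq (u k) := by
  induction n with
  | zero =>
    rw [zero_add, h1, Finset.sum_range_one,
      show conj ((s 0 : ℂ) * u 0) * (z * u 0) = z * ((s 0 * Complex.normSq (u 0) : ℝ) : ℂ) by
        simp only [map_mul, Complex.conj_ofReal, Complex.ofReal_mul,
          Complex.normSq_eq_conj_mul_self]
        ring]
    simp
  | succ n ih =>
    have hnext : (s (n + 2) : ℂ) * u (n + 2) = z * u (n + 1) - s n * u n := by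
      linear_combination hrec n
    rw [hnext, Finset.sum_range_succ, mul_add, ← ih,
      show conj ((s (n + 1) : ℂ) * u (n + 1)) * (z * u (n + 1) - s n * u n) =
          z * ((s (n + 1) * Complex.normSq (u (n + 1)) : ℝ) : ℂ) -
            conj (conj ((s n : ℂ) * u n) * (s (n + 1) * u (n + 1))) by
        simp only [map_mul, Complex.conj_conj, Complex.conj_ofReal, Complex.ofReal_mul,
          Complex.normSq_eq_conj_mul_self]
        ring]
    simp only [Complex.sub_im, Complex.im_mul_ofReal, Complex.conj_im]
    ring

theorem eq_zero_of_recurrence (hs : ∀ n, 0 < s n) (hz : z.im ≠ 0)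
    (h1 : (s 1 : ℂ) * u 1 = z * u 0)
    (hrec : ∀ n, (s n : ℂ) * u n + s (n + 2) * u (n + 2) = z * u (n + 1))
    (hsum : Summable fun n => s n * Complex.normSq (u n))
    (hdiv : ¬Summable fun n => 1 / (s n + s (n + 1))) : u = 0 := by
  by_contra hu
  obtain ⟨n₀, hn₀⟩ := Function.ne_iff.1 hu
  set X : ℕ → ℝ := fun n => s n * Complex.normSq (u n) with hX_def
  have hX : ∀ n, X n = s n * ‖u n‖ ^ 2 := fun n => by
    simp only [hX_def, Complex.normSq_eq_norm_sq]
  have hX_nonneg : ∀ n, 0 ≤ X n := fun n => mul_nonneg (hs n).le (Complex.normSq_nonneg _)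
  have hX₀ : 0 < X n₀ := mul_pos (hs n₀) (Complex.normSq_pos.2 hn₀)
  have hlower : ∀ n ≥ n₀, |z.im| * X n₀ ≤ s n * s (n + 1) * (‖u n‖ * ‖u (n + 1)‖) := by
    intro n hn
    calc |z.im| * X n₀
        ≤ |z.im| * ∑ k ∈ Finset.range (n + 1), X k := by
          gcongr
          exact Finset.single_le_sum (fun k _ => hX_nonneg k)
            (Finset.mem_range.2 (Nat.lt_succ_of_le hn))
      _ = |(conj ((s n : ℂ) * u n) * (s (n + 1) * u (n + 1))).im| := by
          rw [im_conj_mul_eq_sum h1 hrec, abs_mul,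
            abs_of_nonneg (Finset.sum_nonneg fun k _ => hX_nonneg k)]
      _ ≤ ‖conj ((s n : ℂ) * u n) * (s (n + 1) * u (n + 1))‖ := Complex.abs_im_le_norm _
      _ = s n * s (n + 1) * (‖u n‖ * ‖u (n + 1)‖) := by
          simp only [norm_mul, Complex.norm_conj, Complex.norm_real, Real.norm_of_nonneg
            (hs _).le]
          ring
  have hupper : ∀ n, 2 * (s n * s (n + 1) * (‖u n‖ * ‖u (n + 1)‖)) ≤
      (s n + s (n + 1)) * (X n + X (n + 1)) := by
    intro n
    rw [hX, hX]
    nlinarith [mul_nonneg (mul_nonneg (hs n).le (hs (n + 1)).le) (sq_nonneg (‖u n‖ - ‖u (n + 1)‖)),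
      sq_nonneg (s n * ‖u n‖), sq_nonneg (s (n + 1) * ‖u (n + 1)‖)]
  refine hdiv (Summable.of_norm_bounded_eventually_nat
    (g := fun n => (X n + X (n + 1)) / (2 * |z.im| * X n₀))
    ((hsum.add ((summable_nat_add_iff 1).2 hsum)).div_const _) ?_)
  filter_upwards [Filter.eventually_ge_atTop n₀] with n hn
  have hpos : 0 < s n + s (n + 1) := add_pos (hs n) (hs (n + 1))
  rw [Real.norm_of_nonneg (one_div_pos.2 hpos).le, div_le_div_iff₀ hpos (by positivity)]
  linarith [hlower n hn, hupper n]

end Recurrence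

section Antitree

variable {V : Type*} {G : SimpleGraph V} {v : V}

theorem IsAntitree.neighborSet_root (hAT : IsAntitree G v) :
    G.neighborSet v = sphere G v 1 := by
  ext w
  refine ⟨fun hw => SimpleGraph.dist_eq_one_iff_adj.2 hw, fun hw => ?_⟩
  have hwv : w ≠ v := by
    rintro rfl
    simp [sphere] at hw
  have hv : v ∈ G.neighborSet w := by
    rw [hAT.2 w hwv, (hw : G.dist v w = 1)]
    simp [sphere]
  exact (G.mem_neighborSet w v).1 hv |>.symm

theorem IsAntitree.neighborSet_of_dist_eq_succ (hAT : IsAntitree G v) {x : V} {n : ℕ}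
    (hx : G.dist v x = n + 1) : G.neighborSet x = sphere G v n ∪ sphere G v (n + 2) := by
  have hxv : x ≠ v := by
    rintro rfl
    simp at hx
  rw [hAT.2 x hxv, hx, Nat.add_sub_cancel]

theorem IsAntitree.radSymm_of_sum_neighbor_eq (hAT : IsAntitree G v) (hG : G.LocallyFinite)
    {f : V → ℂ} {z : ℂ} (hz : z ≠ 0)
    (hf : ∀ x, ∑ y ∈ @SimpleGraph.neighborFinset V G x (hG x), f y = z * f x) :
    RadSymm G v f := by
  intro x y hxy
  cases hn : G.dist v x with
  | zero =>
    have hx : v = x := (hAT.1.dist_eq_zero_iff).1 hn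
    have hy : v = y := (hAT.1.dist_eq_zero_iff).1 (hxy ▸ hn)
    rw [← hx, ← hy]
  | succ n =>
    have hN : @SimpleGraph.neighborFinset V G x (hG x) =
        @SimpleGraph.neighborFinset V G y (hG y) := by
      apply Finset.coe_injective
      rw [SimpleGraph.coe_neighborFinset, SimpleGraph.coe_neighborFinset,
        hAT.neighborSet_of_dist_eq_succ hn, hAT.neighborSet_of_dist_eq_succ (hxy ▸ hn)]
    exact mul_left_cancel₀ hz (by rw [← hf, ← hf, hN])

variable (hfin : ∀ n, (sphere G v n).Finite)

theorem IsAntitree.neighborFinset_root (hAT : IsAntitree G v) (hG : G.LocallyFinite) :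
    @SimpleGraph.neighborFinset V G v (hG v) = (hfin 1).toFinset :=
  Finset.coe_injective (by rw [SimpleGraph.coe_neighborFinset, Set.Finite.coe_toFinset,
    hAT.neighborSet_root])

theorem IsAntitree.neighborFinset_of_dist_eq_succ [DecidableEq V] (hAT : IsAntitree G v)
    (hG : G.LocallyFinite) {x : V} {n : ℕ} (hx : G.dist v x = n + 1) :
    @SimpleGraph.neighborFinset V G x (hG x) = (hfin n).toFinset ∪ (hfin (n + 2)).toFinset :=
  Finset.coe_injective (by rw [SimpleGraph.coe_neighborFinset, Finset.coe_union,
    Set.Finite.coe_toFinset, Set.Finite.coe_toFinset, hAT.neighborSet_of_dist_eq_succ hx])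

theorem sphAvg_dist_eq {f : V → ℂ} (hf : RadSymm G v f) (x : V) :
    sphAvg G v hfin f (G.dist v x) = f x := by
  have hx : x ∈ (hfin (G.dist v x)).toFinset := (hfin _).mem_toFinset.2 rfl
  have hcard : ((hfin (G.dist v x)).toFinset.card : ℂ) ≠ 0 :=
    Nat.cast_ne_zero.2 (Finset.card_ne_zero.2 ⟨x, hx⟩)
  rw [sphAvg, Set.ncard_eq_toFinset_card _ (hfin _), Finset.sum_congr rfl fun y hy =>
    hf y x ((hfin _).mem_toFinset.1 hy), Finset.sum_const, nsmul_eq_mul]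
  field_simp

theorem sum_sphere_eq_ncard_mul_sphAvg (f : V → ℂ) (n : ℕ) :
    ∑ y ∈ (hfin n).toFinset, f y = (sphere G v n).ncard * sphAvg G v hfin f n := by
  rw [sphAvg, Set.ncard_eq_toFinset_card _ (hfin n)]
  rcases Nat.eq_zero_or_pos (hfin n).toFinset.card with h | h
  · simp [Finset.card_eq_zero.1 h]
  · rw [one_div, ← mul_assoc, mul_inv_cancel₀ (Nat.cast_ne_zero.2 h.ne'), one_mul]

theorem summable_ncard_mul_normSq_sphAvg {g : L2 V} (hg : RadSymm G v g) :
    Summable fun n => ((sphere G v n).ncard : ℝ) * Complex.normSq (sphAvg G v hfin g n) := by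
  classical
  have hterm : ∀ n, ((sphere G v n).ncard : ℝ) * Complex.normSq (sphAvg G v hfin g n) =
      ∑ x ∈ (hfin n).toFinset, Complex.normSq (g x) := by
    intro n
    rw [Finset.sum_congr rfl (g := fun _ => Complex.normSq (sphAvg G v hfin g n)) fun x hx => ?_,
      Finset.sum_const, nsmul_eq_mul, Set.ncard_eq_toFinset_card _ (hfin n)]
    rw [← sphAvg_dist_eq hfin hg x, show G.dist v x = n from (hfin n).mem_toFinset.1 hx]
  have hg2 : Summable fun x => Complex.normSq (g x) := by
    simpa [Complex.normSq_eq_norm_sq] using (lp.hasSum_norm (p := 2) (by norm_num) g).summable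
  refine summable_of_sum_range_le (c := ∑' x, Complex.normSq (g x))
    (fun n => mul_nonneg (Nat.cast_nonneg _) (Complex.normSq_nonneg _)) fun N => ?_
  rw [Finset.sum_congr rfl fun n _ => hterm n, ← Finset.sum_biUnion fun m _ n _ hmn => ?_]
  · exact hg2.sum_le_tsum _ fun x _ => Complex.normSq_nonneg _
  · simp only [Function.onFun, Finset.disjoint_left, Set.Finite.mem_toFinset, sphere,
      Set.mem_ofPred_eq]
    exact fun x hm hn => hmn (hm.symm.trans hn)

end Antitree

theorem IsAntitree.eq_zero_of_sum_neighbor_eq {V : Type*} {G : SimpleGraph V} {v : V}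
    (hAT : IsAntitree G v) (hG : G.LocallyFinite) (hpos : ∀ n, 0 < (sphere G v n).ncard)
    (hdiv : ¬Summable fun n => 1 / (((sphere G v n).ncard : ℝ) + (sphere G v (n + 1)).ncard))
    {z : ℂ} (hz : z.im ≠ 0) {g : L2 V}
    (hg : ∀ x, ∑ y ∈ @SimpleGraph.neighborFinset V G x (hG x), g y = z * g x) : g = 0 := by
  classical
  have hfin : ∀ n, (sphere G v n).Finite := fun n => Set.finite_of_ncard_pos (hpos n)
  have hrad : RadSymm G v g :=
    hAT.radSymm_of_sum_neighbor_eq hG (fun h => hz (by rw [h, Complex.zero_im])) hg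
  set u := sphAvg G v hfin g
  have hgu : ∀ x, g x = u (G.dist v x) := fun x => (sphAvg_dist_eq hfin hrad x).symm
  have hN : ∀ x n, G.dist v x = n + 1 → ∑ y ∈ @SimpleGraph.neighborFinset V G x (hG x), g y =
      ∑ y ∈ (hfin n).toFinset, g y + ∑ y ∈ (hfin (n + 2)).toFinset, g y := by
    intro x n hx
    rw [hAT.neighborFinset_of_dist_eq_succ hfin hG hx, Finset.sum_union]
    refine Finset.disjoint_left.2 fun y h1 h2 => ?_
    simp only [Set.Finite.mem_toFinset, sphere, Set.mem_ofPred_eq] at h1 h2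
    omega
  have hNv : ∑ y ∈ @SimpleGraph.neighborFinset V G v (hG v), g y =
      ∑ y ∈ (hfin 1).toFinset, g y := by
    rw [hAT.neighborFinset_root hfin hG]
  have h1 : ((sphere G v 1).ncard : ℝ) * u 1 = z * u 0 := by
    rw [Complex.ofReal_natCast, ← sum_sphere_eq_ncard_mul_sphAvg, ← hNv, hg v, hgu v,
      SimpleGraph.dist_self]
  have hrec : ∀ n, ((sphere G v n).ncard : ℝ) * u n + ((sphere G v (n + 2)).ncard : ℝ) * u (n + 2)
      = z * u (n + 1) := by
    intro n
    obtain ⟨x, hx⟩ := (Set.ncard_pos (hfin (n + 1))).1 (hpos (n + 1))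
    rw [Complex.ofReal_natCast, Complex.ofReal_natCast, ← sum_sphere_eq_ncard_mul_sphAvg,
      ← sum_sphere_eq_ncard_mul_sphAvg, ← hN x n hx, hg x, hgu x, (hx : G.dist v x = n + 1)]
  have hu : u = 0 := eq_zero_of_recurrence (fun n => Nat.cast_pos.2 (hpos n)) hz h1 hrec
    (summable_ncard_mul_normSq_sphAvg hfin hrad) hdiv
  ext x
  rw [hgu x, hu]
  rfl

theorem IsAntitree.defSubspace_adjOp_eq_bot {V : Type*} {G : SimpleGraph V} {v : V}
    (hAT : IsAntitree G v) (hG : G.LocallyFinite) (hpos : ∀ n, 0 < (sphere G v n).ncard)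
    (hdiv : ¬Summable fun n => 1 / (((sphere G v n).ncard : ℝ) + (sphere G v (n + 1)).ncard))
    {z : ℂ} (hz : z.im ≠ 0) : defSubspace (adjOp G hG) z = ⊥ := by
  refine (defSubspace_eq_bot_iff _ _).2 fun y hy => hAT.eq_zero_of_sum_neighbor_eq hG hpos hdiv hz
    fun x => ?_
  rw [← adjOp_adjoint_apply, hy]
  rfl

theorem not_summable_one_div_of_le_mul_succ {f : ℕ → ℝ} {C : ℝ} (hpos : ∀ n, 0 < f n)
    (hle : ∀ n, f n ≤ C * (n + 1)) : ¬Summable fun n => 1 / f n := by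
  intro hf
  have hharmonic : Summable fun n : ℕ => 1 / ((n : ℝ) + 1) :=
    (hf.mul_left C).of_nonneg_of_le (fun n => by positivity) fun n => by
      rw [mul_one_div, div_le_div_iff₀ (by positivity) (hpos n), one_mul]
      exact hle n
  exact Real.not_summable_one_div_natCast
    ((summable_nat_add_iff 1).1 (by simpa only [Nat.cast_add, Nat.cast_one] using hharmonic))

theorem antitree_essentially_selfadjoint_general {V : Type}
    (G : SimpleGraph V) (hG : G.LocallyFinite) (v : V) (hAT : IsAntitree G v)
    (α : ℝ) (hα0 : 0 < α) (hα1 : α ≤ 1)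
    (h0 : (sphere G v 0).ncard = 1)
    (hs : ∀ n : ℕ, 1 ≤ n → (sphere G v n).ncard = ⌊(n : ℝ) ^ α⌋₊) :
    EssSelfAdj (adjOp G hG) ∧ etaP (adjOp G hG) = 0 ∧ etaM (adjOp G hG) = 0 := by
  have hpos : ∀ n, 0 < (sphere G v n).ncard := by
    rintro (_ | n)
    · simp [h0]
    · rw [hs _ n.succ_pos]
      exact Nat.floor_pos.2 (Real.one_le_rpow (by simp) hα0.le)
  have hle : ∀ n : ℕ, ((sphere G v n).ncard : ℝ) ≤ n + 1 := by
    rintro (_ | n)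
    · simp [h0]
    · rw [hs _ n.succ_pos]
      have hn : (1 : ℝ) ≤ (n + 1 : ℕ) := by simp
      calc (⌊((n + 1 : ℕ) : ℝ) ^ α⌋₊ : ℝ) ≤ ((n + 1 : ℕ) : ℝ) ^ α := Nat.floor_le (by positivity)
        _ ≤ ((n + 1 : ℕ) : ℝ) ^ (1 : ℝ) := Real.rpow_le_rpow_of_exponent_le hn hα1
        _ ≤ _ := by simp
  have hdiv := not_summable_one_div_of_le_mul_succ (C := 3)
    (fun n => add_pos (Nat.cast_pos.2 (hpos n)) (Nat.cast_pos.2 (hpos (n + 1))))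
    fun n => by have := hle (n + 1); push_cast at this; linarith [hle n]
  have hker : ∀ z : ℂ, z.im ≠ 0 → defSubspace (adjOp G hG) z = ⊥ :=
    fun z hz => hAT.defSubspace_adjOp_eq_bot hG hpos hdiv hz
  refine ⟨essSelfAdj_of_defSubspace_eq_bot Cc_dense (adjOp_isFormalAdjoint G hG)
    (hker _ (by simp)) (hker _ (by simp)), ?_, ?_⟩
  · rw [etaP, hker _ (by simp), rank_bot]
  · rw [etaM, hker _ (by simp), rank_bot]

/-- The adjacency operator of the antitree with sphere sizes
`s₀ = 1`, `s_n = ⌊n^α⌋` for `0 < α ≤ 1` is essentially self-adjoint; equivalently its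
deficiency indices vanish. -/
theorem antitree_essentially_selfadjoint {V : Type} [Countable V]
    (G : SimpleGraph V) (hG : G.LocallyFinite) (v : V) (hAT : IsAntitree G v)
    (α : ℝ) (hα0 : 0 < α) (hα1 : α ≤ 1)
    (h0 : (sphere G v 0).ncard = 1)
    (hs : ∀ n : ℕ, 1 ≤ n → (sphere G v n).ncard = ⌊(n : ℝ) ^ α⌋₊) :
    EssSelfAdj (adjOp G hG) ∧ etaP (adjOp G hG) = 0 ∧ etaM (adjOp G hG) = 0 :=
  antitree_essentially_selfadjoint_general G hG v hAT α hα0 hα1 h0 hs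

end DefIdx
end
end

section
/- Let S be a closed, densely defined symmetric operator on a complex Hilbert space and let B be a bounded self-adjoint operator on the same space. Then the closure of (S+B)|_{D(S)} has domain D(S) and the same deficiency indices as S: η₊(S+B) = η₊(S) and η₋(S+B) = η₋(S). -/
noncomputable section

open scoped ComplexConjugate

/-!
Since `B` is bounded, `S + B` on `D(S)` is already closed, so it is its own closure. For
`z = ±i`, `ker ((S + B)* - z)` is the orthogonal complement of the range of `S + B - z̄`.
Each `S + t B` (`t ∈ ℝ`) is symmetric, so `‖(S + t B - z̄) f‖ ≥ ‖f‖`; hence its range is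
closed, and for `‖(s - t) B‖ < 1` every unit vector of one range lies at distance `< 1` from
the other range, which forces the two orthogonal complements to have the same dimension. The
dimension is thus locally constant, hence constant, in `t ∈ ℝ`.
-/

namespace Submodule

variable {𝕜 E : Type*} [RCLike 𝕜] [NormedAddCommGroup E] [InnerProductSpace 𝕜 E]
  [CompleteSpace E]

/-- The orthogonal projection onto `Mᗮ` is injective on `Nᗮ`. -/
theorem rank_orthogonal_le_of_forall_exists_norm_sub_lt {M N : Submodule 𝕜 E}
    (hM : IsClosed (M : Set E)) (h : ∀ u ∈ M, ‖u‖ = 1 → ∃ v ∈ N, ‖u - v‖ < 1) :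
    Module.rank 𝕜 Nᗮ ≤ Module.rank 𝕜 Mᗮ := by
  have : CompleteSpace M := hM.completeSpace_coe
  refine LinearMap.rank_le_of_injective
    (Mᗮ.orthogonalProjectionOnto.toLinearMap ∘ₗ Nᗮ.subtype) ?_
  rw [← LinearMap.ker_eq_bot, LinearMap.ker_eq_bot']
  rintro ⟨u, huN⟩ hproj
  have huM : u ∈ M := by
    have := orthogonalProjectionOnto_eq_zero_iff.mp
      (show Mᗮ.orthogonalProjectionOnto u = 0 from hproj)
    rwa [orthogonal_orthogonal] at this
  suffices u = 0 from Subtype.ext this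
  by_contra hu0
  set w : E := (‖u‖⁻¹ : 𝕜) • u
  have hw : ‖w‖ = 1 := norm_smul_inv_norm hu0
  obtain ⟨v, hvN, hlt⟩ := h w (M.smul_mem _ huM) hw
  have horth : inner 𝕜 w v = 0 := inner_left_of_mem_orthogonal hvN (Nᗮ.smul_mem _ huN)
  have hpyth : ‖w - v‖ ^ 2 = 1 + ‖v‖ ^ 2 := by
    rw [@norm_sub_sq 𝕜, horth, hw]
    simp
  nlinarith [norm_nonneg v, norm_nonneg (w - v)]

theorem rank_orthogonal_eq_of_forall_exists_norm_sub_lt {M N : Submodule 𝕜 E}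
    (hM : IsClosed (M : Set E)) (hN : IsClosed (N : Set E))
    (hMN : ∀ u ∈ M, ‖u‖ = 1 → ∃ v ∈ N, ‖u - v‖ < 1)
    (hNM : ∀ u ∈ N, ‖u‖ = 1 → ∃ v ∈ M, ‖u - v‖ < 1) :
    Module.rank 𝕜 Mᗮ = Module.rank 𝕜 Nᗮ :=
  le_antisymm (rank_orthogonal_le_of_forall_exists_norm_sub_lt hN hNM)
    (rank_orthogonal_le_of_forall_exists_norm_sub_lt hM hMN)

end Submodule

namespace LinearPMap

section Closure

variable {R E F : Type*} [CommRing R] [AddCommGroup E] [Module R E] [TopologicalSpace E]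
  [AddCommGroup F] [Module R F] [TopologicalSpace F] [ContinuousAdd E] [ContinuousAdd F]
  [TopologicalSpace R] [ContinuousSMul R E] [ContinuousSMul R F]

theorem IsClosed.closure_eq_s10 {T : E →ₗ.[R] F} (hT : T.IsClosed) : T.closure = T := by
  apply eq_of_eq_graph
  rw [← hT.isClosable.graph_closure_eq_closure_graph]
  exact hT.submodule_topologicalClosure_eq

end Closure

variable {𝕜 E F : Type*} [NontriviallyNormedField 𝕜] [NormedAddCommGroup E] [NormedSpace 𝕜 E]
  [CompleteSpace E] [NormedAddCommGroup F] [NormedSpace 𝕜 F] [CompleteSpace F]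

/-- The graph of `T` is complete, and on it `(x, T x) ↦ T x` is antilipschitz. -/
theorem IsClosed.isClosed_range_of_norm_le {T : E →ₗ.[𝕜] F} (hT : T.IsClosed)
    (hle : ∀ x : T.domain, ‖(x : E)‖ ≤ ‖T x‖) :
    _root_.IsClosed (LinearMap.range T.toFun : Set F) := by
  have : CompleteSpace T.graph := _root_.IsClosed.completeSpace_coe (hs := hT)
  let snd : T.graph →L[𝕜] F := (ContinuousLinearMap.snd 𝕜 E F).comp T.graph.subtypeL
  have hsnd : AntilipschitzWith 1 snd := by
    refine snd.antilipschitz_of_bound fun p => ?_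
    obtain ⟨x, hx1, hx2⟩ := (mem_graph_iff T).mp p.2
    have hfst : ‖(p : E × F).1‖ ≤ ‖(p : E × F).2‖ := by rw [← hx1, ← hx2]; exact hle x
    simpa [snd, Prod.norm_def] using hfst
  rw [← graph_map_snd_eq_range, Submodule.map_coe, Set.image_eq_range]
  exact hsnd.isClosed_range snd.uniformContinuous

end LinearPMap

namespace DefIdx

section Operators

variable {H : Type*} [NormedAddCommGroup H] [InnerProductSpace ℂ H]

@[simp]
theorem addBdd_apply (S : H →ₗ.[ℂ] H) (B : H →L[ℂ] H) (f : (addBdd S B).domain) :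
    addBdd S B f = S f + B f :=
  rfl

theorem addBdd_add (S : H →ₗ.[ℂ] H) (B C : H →L[ℂ] H) :
    addBdd (addBdd S B) C = addBdd S (B + C) :=
  LinearPMap.ext' <| LinearMap.ext fun _ => add_assoc _ _ _

theorem addBdd_isClosed {S : H →ₗ.[ℂ] H} (hS : S.IsClosed) (B : H →L[ℂ] H) :
    (addBdd S B).IsClosed := by
  have hgraph : ((addBdd S B).graph : Set (H × H)) =
      (fun p : H × H => (p.1, p.2 - B p.1)) ⁻¹' S.graph := by
    ext ⟨x, y⟩
    simp only [Set.mem_preimage, SetLike.mem_coe, LinearPMap.mem_graph_iff]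
    refine exists_congr fun f => and_congr_right fun hfx => ?_
    rw [addBdd_apply, ← hfx, eq_sub_iff_add_eq]
  change _root_.IsClosed ((addBdd S B).graph : Set (H × H))
  rw [hgraph]
  exact hS.preimage (by fun_prop)

/-- `⟪T f, f⟫` is real, so `T f` and `c • f` are orthogonal in the real sense. -/
theorem IsSymm.norm_add_smul_sq {T : H →ₗ.[ℂ] H} (hT : IsSymm T) {c : ℂ} (hc : c.re = 0)
    (f : T.domain) : ‖T f + c • (f : H)‖ ^ 2 = ‖T f‖ ^ 2 + ‖c‖ ^ 2 * ‖(f : H)‖ ^ 2 := by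
  have him : (inner ℂ (T f) (f : H)).im = 0 := by
    rw [← Complex.conj_eq_iff_im, inner_conj_symm, hT f f]
  rw [@norm_add_sq ℂ, norm_smul, inner_smul_right]
  simp [hc, him]
  ring

theorem IsSymm.norm_le_norm_add_smul {T : H →ₗ.[ℂ] H} (hT : IsSymm T) {c : ℂ} (hc : c.re = 0)
    (hc1 : ‖c‖ = 1) (f : T.domain) : ‖(f : H)‖ ≤ ‖T f + c • (f : H)‖ := by
  have hsq := hT.norm_add_smul_sq hc f
  rw [hc1] at hsq
  nlinarith [norm_nonneg (T f), norm_nonneg (T f + c • (f : H)), norm_nonneg (f : H)]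

theorem exists_norm_sub_lt_of_mem_range_addBdd {S : H →ₗ.[ℂ] H} {C₁ C₂ : H →L[ℂ] H}
    (h₁ : ∀ f : S.domain, ‖(f : H)‖ ≤ ‖addBdd S C₁ f‖) (hC : ‖C₁ - C₂‖ < 1) {u : H}
    (hu : u ∈ LinearMap.range (addBdd S C₁).toFun) (hu1 : ‖u‖ = 1) :
    ∃ v ∈ LinearMap.range (addBdd S C₂).toFun, ‖u - v‖ < 1 := by
  obtain ⟨f, rfl⟩ := hu
  refine ⟨_, ⟨f, rfl⟩, ?_⟩
  have hdiff : (addBdd S C₁).toFun f - (addBdd S C₂).toFun f = (C₁ - C₂) f := by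
    change S f + C₁ f - (S f + C₂ f) = _
    rw [add_sub_add_left_eq_sub, sub_apply]
  have hf : ‖(f : H)‖ ≤ 1 := hu1 ▸ h₁ f
  calc ‖(addBdd S C₁).toFun f - (addBdd S C₂).toFun f‖ = ‖(C₁ - C₂) f‖ := by rw [hdiff]
    _ ≤ ‖C₁ - C₂‖ * ‖(f : H)‖ := (C₁ - C₂).le_opNorm f
    _ < 1 := by nlinarith [norm_nonneg (C₁ - C₂), norm_nonneg (f : H)]

variable [CompleteSpace H]

theorem IsSymm.addBdd {S : H →ₗ.[ℂ] H} (hS : IsSymm S) {B : H →L[ℂ] H}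
    (hB : IsSelfAdjoint B) : IsSymm (addBdd S B) := fun f g => by
  simp only [addBdd_apply, inner_add_left, inner_add_right, hS f g]
  congr 1
  exact hB.isSymmetric f g

end Operators

section Deficiency

variable {H : Type*} [NormedAddCommGroup H] [InnerProductSpace ℂ H] [CompleteSpace H]

theorem rank_orthogonal_range_addBdd_eq {S : H →ₗ.[ℂ] H} (hS : S.IsClosed)
    {C₁ C₂ : H →L[ℂ] H} (h₁ : ∀ f : S.domain, ‖(f : H)‖ ≤ ‖addBdd S C₁ f‖)
    (h₂ : ∀ f : S.domain, ‖(f : H)‖ ≤ ‖addBdd S C₂ f‖) (hC : ‖C₁ - C₂‖ < 1) :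
    Module.rank ℂ (LinearMap.range (addBdd S C₁).toFun)ᗮ =
      Module.rank ℂ (LinearMap.range (addBdd S C₂).toFun)ᗮ :=
  Submodule.rank_orthogonal_eq_of_forall_exists_norm_sub_lt
    ((addBdd_isClosed hS C₁).isClosed_range_of_norm_le h₁)
    ((addBdd_isClosed hS C₂).isClosed_range_of_norm_le h₂)
    (fun _ hu hu1 => exists_norm_sub_lt_of_mem_range_addBdd h₁ hC hu hu1)
    (fun _ hu hu1 =>
      exists_norm_sub_lt_of_mem_range_addBdd h₂ (norm_sub_rev C₁ C₂ ▸ hC) hu hu1)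

theorem rank_orthogonal_range_addBdd_add_smul_one_eq {S : H →ₗ.[ℂ] H} (hS : S.IsClosed)
    (hSsym : IsSymm S) {B : H →L[ℂ] H} (hB : IsSelfAdjoint B) {c : ℂ} (hc : c.re = 0)
    (hc1 : ‖c‖ = 1) :
    Module.rank ℂ (LinearMap.range (addBdd S (B + c • 1)).toFun)ᗮ =
      Module.rank ℂ (LinearMap.range (addBdd S (c • 1)).toFun)ᗮ := by
  let C : ℝ → H →L[ℂ] H := fun t => t • B + c • 1
  let rk : (H →L[ℂ] H) → Cardinal := fun D =>
    Module.rank ℂ (LinearMap.range (addBdd S D).toFun)ᗮ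
  have hC : ∀ (t : ℝ) (f : S.domain), ‖(f : H)‖ ≤ ‖addBdd S (C t) f‖ := fun t f =>
    ((hSsym.addBdd ((IsSelfAdjoint.all t).smul hB)).norm_le_norm_add_smul hc hc1 f).trans_eq
      (congrArg norm (add_assoc _ _ _))
  have hlocal : IsLocallyConstant (rk ∘ C) := by
    refine (IsLocallyConstant.iff_eventually_eq _).mpr fun t => ?_
    have hnear : ∀ᶠ s in nhds t, ‖C s - C t‖ < 1 :=
      ContinuousAt.eventually_lt (by fun_prop) continuousAt_const (by simp)
    filter_upwards [hnear] with s hs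
    exact rank_orthogonal_range_addBdd_eq hS (hC s) (hC t) hs
  have hends := hlocal.apply_eq_of_preconnectedSpace 1 0
  rwa [Function.comp_apply, Function.comp_apply, show C 1 = B + c • 1 by simp [C],
    show C 0 = c • 1 by simp [C]] at hends

theorem mem_map_subtype_defSubspace_iff (T : H →ₗ.[ℂ] H) (z : ℂ) (x : H) :
    x ∈ (defSubspace T z).map T.adjoint.domain.subtype ↔ (x, z • x) ∈ T.adjoint.graph := by
  simp only [Submodule.mem_map, defSubspace, LinearMap.mem_ker, LinearMap.sub_apply,
    LinearMap.smul_apply, Submodule.coe_subtype, sub_eq_zero, LinearPMap.mem_graph_iff,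
    LinearPMap.toFun_eq_coe]
  constructor
  · rintro ⟨y, hy, rfl⟩
    exact ⟨y, rfl, hy⟩
  · rintro ⟨y, rfl, hy⟩
    exact ⟨y, hy, rfl⟩

theorem map_subtype_defSubspace {T : H →ₗ.[ℂ] H} (hT : Dense (T.domain : Set H)) (z : ℂ) :
    (defSubspace T z).map T.adjoint.domain.subtype =
      (LinearMap.range (addBdd T (-(conj z) • 1)).toFun)ᗮ := by
  have hinner : ∀ (f : T.domain) (x : H), inner ℂ (addBdd T (-(conj z) • 1) f) x =
      inner ℂ (T f) x - inner ℂ (f : H) (z • x) := fun f x => by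
    change inner ℂ (T f + -(conj z) • (f : H)) x = _
    rw [inner_add_left, inner_smul_left, inner_smul_right, map_neg, Complex.conj_conj, neg_mul,
      ← sub_eq_add_neg]
  ext x
  rw [mem_map_subtype_defSubspace_iff, T.adjoint_graph_eq_graph_adjoint hT,
    Submodule.mem_adjoint_iff, Submodule.mem_orthogonal]
  constructor
  · rintro h _ ⟨f, rfl⟩
    exact (hinner f x).trans (h _ _ (T.mem_graph f))
  · rintro h a b hab
    obtain ⟨f, rfl, rfl⟩ := (LinearPMap.mem_graph_iff T).mp hab
    exact (hinner f x).symm.trans (h _ ⟨f, rfl⟩)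

theorem rank_defSubspace {T : H →ₗ.[ℂ] H} (hT : Dense (T.domain : Set H)) (z : ℂ) :
    Module.rank ℂ (defSubspace T z) =
      Module.rank ℂ (LinearMap.range (addBdd T (-(conj z) • 1)).toFun)ᗮ := by
  rw [← map_subtype_defSubspace hT]
  exact (Submodule.equivMapOfInjective _ (Submodule.injective_subtype _) _).rank_eq

theorem rank_defSubspace_addBdd {S : H →ₗ.[ℂ] H} (hS : S.IsClosed)
    (hSd : Dense (S.domain : Set H)) (hSsym : IsSymm S) {B : H →L[ℂ] H}
    (hB : IsSelfAdjoint B) {z : ℂ} (hz : z.re = 0) (hz1 : ‖z‖ = 1) :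
    Module.rank ℂ (defSubspace (addBdd S B) z) = Module.rank ℂ (defSubspace S z) := by
  rw [rank_defSubspace (T := addBdd S B) hSd, rank_defSubspace hSd, addBdd_add]
  exact rank_orthogonal_range_addBdd_add_smul_one_eq hS hSsym hB (by simpa using hz)
    (by simpa using hz1)

end Deficiency

/-- Adding a bounded self-adjoint operator `B` to a closed densely
defined symmetric operator `S` does not change the domain (of the closure) nor the
deficiency indices. -/
theorem bounded_perturbation_stability {H : Type} [NormedAddCommGroup H]
    [InnerProductSpace ℂ H] [CompleteSpace H] (S : H →ₗ.[ℂ] H)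
    (hScl : S.IsClosed) (hSd : Dense (S.domain : Set H)) (hSsym : IsSymm S)
    (B : H →L[ℂ] H) (hB : IsSelfAdjoint B) :
    (addBdd S B).closure.domain = S.domain ∧
    etaP (addBdd S B).closure = etaP S ∧
    etaM (addBdd S B).closure = etaM S := by
  rw [(addBdd_isClosed hScl B).closure_eq_s10]
  exact ⟨rfl, rank_defSubspace_addBdd hScl hSd hSsym hB (by simp) (by simp),
    rank_defSubspace_addBdd hScl hSd hSsym hB (by simp) (by simp)⟩

end DefIdx
end
end
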